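/- If 𝔹 is a complete Boolean algebra satisfying the countable chain condition, then in bSet 𝔹 the truth value of the statement 'there exists a surjection from ω̌ onto ℵ₁̌' is ⊥, and likewise the truth value of 'there exists a surjection from ℵ₁̌ onto ℵ₂̌' is ⊥. More generally, for infinite regular cardinals κ₁ < κ₂, CCC implies that no nonzero truth value forces a surjection from κ₁̌ onto κ₂̌. -/

import Mathlib

universe u

/-- Boolean-valued sets over a complete Boolean algebra `𝔹`. -/
inductive bSet (𝔹 : Type u) [CompleteBooleanAlgebra 𝔹] : Type (u + 1)
  | mk (α : Type u) (A : α → bSet 𝔹) (B : α → 𝔹) : bSet 𝔹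

namespace bSet

variable {𝔹 : Type u} [CompleteBooleanAlgebra 𝔹]

/-- Boolean-valued equality:
`⟨α,A,B⟩ =ᴮ ⟨α\u0027,A\u0027,B\u0027⟩ := (⨅ a, B a ⟹ ⨆ a\u0027, B\u0027 a\u0027 ⊓ (A a =ᴮ A\u0027 a\u0027)) ⊓ (symmetrically)`. -/
def bvEq : bSet 𝔹 → bSet 𝔹 → 𝔹
  | ⟨_, A, B⟩, ⟨_, A', B'⟩ =>
      (⨅ a, B a ⇨ ⨆ a', B' a' ⊓ bvEq (A a) (A' a')) ⊓
      (⨅ a', B' a' ⇨ ⨆ a, B a ⊓ bvEq (A a) (A' a'))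

/-- Boolean-valued membership: `x ∈ᴮ ⟨α,A,B⟩ := ⨆ a, B a ⊓ (x =ᴮ A a)`. -/
def bvMem (x : bSet 𝔹) : bSet 𝔹 → 𝔹
  | ⟨_, A, B⟩ => ⨆ a, B a ⊓ bvEq x (A a)

/-- Boolean-valued subset. -/
def bvSubset : bSet 𝔹 → bSet 𝔹 → 𝔹
  | ⟨_, A, B⟩, y => ⨅ a, B a ⇨ bvMem (A a) y

/-- Boolean-valued biimplication. -/
def biimp (a b : 𝔹) : 𝔹 := (a ⇨ b) ⊓ (b ⇨ a)

end bSet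

namespace bSet

variable (𝔹 : Type u) [CompleteBooleanAlgebra 𝔹]

/-- The canonical name map `check : pSet → bSet 𝔹`, assigning truth value `⊤` everywhere. -/
def check : PSet.{u} → bSet 𝔹
  | ⟨α, A⟩ => ⟨α, fun a => check (A a), fun _ => ⊤⟩

variable {𝔹}

/-- The unordered pair `{x, y}` in `bSet 𝔹`. -/
def bvUPair (x y : bSet 𝔹) : bSet 𝔹 :=
  ⟨ULift Bool, fun b => cond b.down x y, fun _ => ⊤⟩

/-- The Kuratowski ordered pair `(x, y) = {{x}, {x, y}}` in `bSet 𝔹`. -/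
def kpair (x y : bSet 𝔹) : bSet 𝔹 := bvUPair (bvUPair x x) (bvUPair x y)

/-- Truth value that `f` is a functional set of ordered pairs. -/
def isFunc (f : bSet 𝔹) : 𝔹 :=
  (⨅ w : bSet 𝔹, bvMem w f ⇨ ⨆ x : bSet 𝔹, ⨆ y : bSet 𝔹, bvEq w (kpair x y)) ⊓
  (⨅ x : bSet 𝔹, ⨅ y : bSet 𝔹, ⨅ y' : bSet 𝔹,
    (bvMem (kpair x y) f ⊓ bvMem (kpair x y') f) ⇨ bvEq y y')

/-- Truth value that `f` is total on `x` with values in `y`. -/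
def isTotal (x y f : bSet 𝔹) : 𝔹 :=
  ⨅ a : bSet 𝔹, bvMem a x ⇨ ⨆ b : bSet 𝔹, bvMem b y ⊓ bvMem (kpair a b) f

/-- Truth value that `f` is a function from `x` to `y`. -/
def isFunc' (x y f : bSet 𝔹) : 𝔹 :=
  isFunc f ⊓ isTotal x y f ⊓
    (⨅ a : bSet 𝔹, ⨅ b : bSet 𝔹, bvMem (kpair a b) f ⇨ (bvMem a x ⊓ bvMem b y))

/-- Truth value that every element of `y` is a value of `f` taken on `x`. -/
def isSurj (x y f : bSet 𝔹) : 𝔹 :=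
  ⨅ b : bSet 𝔹, bvMem b y ⇨ ⨆ a : bSet 𝔹, bvMem a x ⊓ bvMem (kpair a b) f

/-- Truth value that `f` is a surjective function from `x` onto `y`. -/
def isSurjOnto (x y f : bSet 𝔹) : 𝔹 := isFunc' x y f ⊓ isSurj x y f

end bSet

/-- The von Neumann encoding of an ordinal as a `PSet`: the elements of
`ordinalMk o` are the `ordinalMk`s of the ordinals below `o`. -/
noncomputable def ordinalMk (o : Ordinal.{u}) : PSet.{u} :=
  ⟨o.ToType, fun i => ordinalMk (@Ordinal.typein o.ToType (· < ·) isWellOrder_lt i)⟩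
  termination_by o
  decreasing_by exact Ordinal.typein_lt_self i

/-- A complete Boolean algebra has the countable chain condition if every antichain
has countable image. -/
def CCC (𝔹 : Type u) [CompleteBooleanAlgebra 𝔹] : Prop :=
  ∀ (ι : Type u) (a : ι → 𝔹), (∀ i j, i ≠ j → a i ⊓ a j = ⊥) →
    (Set.range a).Countable

/-!
Suppose a nonzero `Γ` forces `f` to be a surjection from `x̌` onto `y̌`, where the elements
`y_j` of `y` are pairwise inequivalent. Pick for each `j` an `i` with
`Γ ⊓ ⟦(x̌_i, y̌_j) ∈ f⟧ ≠ ⊥`. Since `⟦y̌_j = y̌_j'⟧ = ⊥` for `j ≠ j'`, functionality of `f`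
makes these values, for a fixed `i`, an antichain of nonzero elements, which is countable by
the CCC. Hence `|y| ≤ |x| · ℵ₀`, which fails for `x = ω, y = ω₁` and for `x = κ₁, y = κ₂`
with `ℵ₀ ≤ κ₁ < κ₂`.
-/

namespace bSet

variable {𝔹 : Type u} [CompleteBooleanAlgebra 𝔹]

theorem bvEq_symm : ∀ x y : bSet 𝔹, bvEq x y = bvEq y x
  | ⟨_, A, _⟩, ⟨_, A', _⟩ => by
    rw [bvEq, bvEq, inf_comm]
    simp only [bvEq_symm (A _) (A' _)]

theorem bvEq_refl : ∀ x : bSet 𝔹, bvEq x x = ⊤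
  | ⟨_, A, _⟩ => by
    rw [bvEq, eq_top_iff]
    exact le_inf (le_iInf fun a => le_himp_iff.2 (le_iSup_of_le a (by simp [bvEq_refl (A a)])))
      (le_iInf fun a => le_himp_iff.2 (le_iSup_of_le a (by simp [bvEq_refl (A a)])))

theorem bvEq_eq_bvSubset_inf_bvSubset : ∀ x y : bSet 𝔹, bvEq x y = bvSubset x y ⊓ bvSubset y x
  | ⟨_, A, _⟩, ⟨_, A', _⟩ => by
    simp only [bvEq, bvSubset, bvMem, bvEq_symm (A' _) (A _)]

theorem bvEq_mk_inf_le_bvMem {α : Type u} {A : α → bSet 𝔹} {B : α → 𝔹} (y : bSet 𝔹) (a : α) :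
    bvEq ⟨α, A, B⟩ y ⊓ B a ≤ bvMem (A a) y := by
  rw [bvEq_eq_bvSubset_inf_bvSubset, bvSubset]
  exact (inf_le_inf_right _ (inf_le_left.trans (iInf_le _ a))).trans himp_inf_le

theorem bvMem_inf_bvEq_le_of_trans {u : bSet 𝔹} {β γ : Type u} {A' : β → bSet 𝔹} {B' : β → 𝔹}
    {A'' : γ → bSet 𝔹} {B'' : γ → 𝔹}
    (h : ∀ b c, bvEq u (A' b) ⊓ bvEq (A' b) (A'' c) ≤ bvEq u (A'' c)) :
    bvMem u ⟨β, A', B'⟩ ⊓ bvEq ⟨β, A', B'⟩ ⟨γ, A'', B''⟩ ≤ bvMem u ⟨γ, A'', B''⟩ := by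
  rw [bvMem, iSup_inf_eq]
  refine iSup_le fun b => ?_
  calc B' b ⊓ bvEq u (A' b) ⊓ bvEq ⟨β, A', B'⟩ ⟨γ, A'', B''⟩
      ≤ bvEq u (A' b) ⊓ bvMem (A' b) ⟨γ, A'', B''⟩ :=
        le_inf (inf_le_left.trans inf_le_right)
          ((le_inf inf_le_right (inf_le_left.trans inf_le_left)).trans (bvEq_mk_inf_le_bvMem _ b))
    _ = ⨆ c, B'' c ⊓ (bvEq u (A' b) ⊓ bvEq (A' b) (A'' c)) := by
        rw [bvMem, inf_iSup_eq]
        exact iSup_congr fun c => inf_left_comm _ _ _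
    _ ≤ bvMem u ⟨γ, A'', B''⟩ := iSup_mono fun c => inf_le_inf_left _ (h b c)

theorem bvEq_trans : ∀ x y z : bSet 𝔹, bvEq x y ⊓ bvEq y z ≤ bvEq x z
  | ⟨α, A, B⟩, ⟨β, A', B'⟩, ⟨γ, A'', B''⟩ => by
    -- Every recursive call is at an element `A a` of `x`; symmetry of `bvEq` turns the
    -- inclusion of `z` into `x` into such an instance.
    rw [bvEq_eq_bvSubset_inf_bvSubset ⟨α, A, B⟩ ⟨γ, A'', B''⟩, bvSubset, bvSubset]
    refine le_inf (le_iInf fun a => le_himp_iff.2 ?_) (le_iInf fun c => le_himp_iff.2 ?_)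
    · calc bvEq ⟨α, A, B⟩ ⟨β, A', B'⟩ ⊓ bvEq ⟨β, A', B'⟩ ⟨γ, A'', B''⟩ ⊓ B a
          ≤ bvMem (A a) ⟨β, A', B'⟩ ⊓ bvEq ⟨β, A', B'⟩ ⟨γ, A'', B''⟩ :=
            le_inf ((inf_le_inf_right _ inf_le_left).trans (bvEq_mk_inf_le_bvMem _ a))
              (inf_le_left.trans inf_le_right)
        _ ≤ bvMem (A a) ⟨γ, A'', B''⟩ :=
            bvMem_inf_bvEq_le_of_trans fun b c => bvEq_trans (A a) (A' b) (A'' c)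
    · calc bvEq ⟨α, A, B⟩ ⟨β, A', B'⟩ ⊓ bvEq ⟨β, A', B'⟩ ⟨γ, A'', B''⟩ ⊓ B'' c
          ≤ bvMem (A'' c) ⟨β, A', B'⟩ ⊓ bvEq ⟨β, A', B'⟩ ⟨α, A, B⟩ := by
            rw [bvEq_symm _ ⟨γ, A'', B''⟩, bvEq_symm ⟨α, A, B⟩]
            exact le_inf ((inf_le_inf_right _ inf_le_right).trans (bvEq_mk_inf_le_bvMem _ c))
              (inf_le_left.trans inf_le_left)
        _ ≤ bvMem (A'' c) ⟨α, A, B⟩ := bvMem_inf_bvEq_le_of_trans fun b a => by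
            rw [inf_comm, bvEq_symm (A'' c) (A' b), bvEq_symm (A' b) (A a), bvEq_symm (A'' c)]
            exact bvEq_trans (A a) (A' b) (A'' c)

theorem bvEq_inf_bvMem_le (x y : bSet 𝔹) : ∀ z : bSet 𝔹, bvEq x y ⊓ bvMem x z ≤ bvMem y z
  | ⟨_, A, _⟩ => by
    rw [bvMem, bvMem, inf_iSup_eq]
    refine iSup_mono fun c => ?_
    rw [inf_left_comm, bvEq_symm x y]
    exact inf_le_inf_left _ (bvEq_trans y x (A c))

theorem bvEq_bvUPair {x x' y y' : bSet 𝔹} :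
    bvEq x x' ⊓ bvEq y y' ≤ bvEq (bvUPair x y) (bvUPair x' y') := by
  rw [bvUPair, bvUPair, bvEq]
  refine le_inf (le_iInf fun b => le_himp_iff.2 ?_) (le_iInf fun b => le_himp_iff.2 ?_) <;>
  · refine inf_le_left.trans (le_iSup_of_le b ?_)
    obtain ⟨_ | _⟩ := b <;> simp

theorem bvEq_kpair_left (a b c : bSet 𝔹) : bvEq a b ≤ bvEq (kpair a c) (kpair b c) := by
  have hc : bvEq a b ≤ bvEq a b ⊓ bvEq c c := by rw [bvEq_refl, inf_top_eq]
  exact le_inf (le_inf le_rfl le_rfl |>.trans bvEq_bvUPair) (hc.trans bvEq_bvUPair)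
    |>.trans bvEq_bvUPair

theorem isFunc_inf_le_bvEq (f x y y' : bSet 𝔹) :
    isFunc f ⊓ (bvMem (kpair x y) f ⊓ bvMem (kpair x y') f) ≤ bvEq y y' :=
  (inf_le_inf_right _ (inf_le_right.trans
    ((iInf_le _ x).trans ((iInf_le _ y).trans (iInf_le _ y'))))).trans himp_inf_le

theorem bvEq_check_eq_bot : ∀ {x y : PSet.{u}}, ¬ x.Equiv y → bvEq (check 𝔹 x) (check 𝔹 y) = ⊥
  | ⟨_, A⟩, ⟨_, A'⟩, h => by
    rw [check, check, bvEq, eq_bot_iff]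
    simp only [PSet.Equiv, not_and_or, not_forall, not_exists] at h
    rcases h with ⟨a, ha⟩ | ⟨b, hb⟩
    · refine inf_le_left.trans ((iInf_le _ a).trans ?_)
      simp [bvEq_check_eq_bot (ha _)]
    · refine inf_le_right.trans ((iInf_le _ b).trans ?_)
      simp [bvEq_check_eq_bot (hb _)]

theorem bvMem_check (a : bSet 𝔹) : ∀ x : PSet.{u},
    bvMem a (check 𝔹 x) = ⨆ i, bvEq a (check 𝔹 (x.Func i))
  | ⟨_, _⟩ => by simp [check, bvMem]

theorem bvMem_check_func (x : PSet.{u}) (i : x.Type) :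
    bvMem (check 𝔹 (x.Func i)) (check 𝔹 x) = ⊤ :=
  eq_top_iff.2 <| (bvMem_check _ x).ge.trans' <| le_iSup_of_le i (bvEq_refl _).ge

theorem isSurj_check_inf_bvMem_le (x : PSet.{u}) (y f b : bSet 𝔹) :
    isSurj (check 𝔹 x) y f ⊓ bvMem b y ≤ ⨆ i, bvMem (kpair (check 𝔹 (x.Func i)) b) f := by
  refine (inf_le_inf_right _ (iInf_le _ b)).trans (himp_inf_le.trans (iSup_le fun a => ?_))
  rw [bvMem_check, iSup_inf_eq]
  exact iSup_mono fun i =>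
    (inf_le_inf_right _ (bvEq_kpair_left a _ b)).trans (bvEq_inf_bvMem_le _ _ f)

end bSet

open Cardinal

theorem CCC.countable_of_pairwise_inf_eq_bot {𝔹 : Type u} [CompleteBooleanAlgebra 𝔹]
    (hccc : CCC 𝔹) {ι : Type u} {a : ι → 𝔹} (ha : ∀ i j, i ≠ j → a i ⊓ a j = ⊥)
    (hne : ∀ i, a i ≠ ⊥) : Countable ι := by
  have hinj : Function.Injective a := fun i j hij =>
    by_contra fun h => hne i (by simpa [hij] using ha i j h)
  have := (hccc ι a ha).to_subtype
  exact Function.Injective.countable (f := Set.rangeFactorization a) fun i j h =>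
    hinj (congrArg Subtype.val h)

theorem CCC.mk_le_mk_mul_aleph0 {𝔹 : Type u} [CompleteBooleanAlgebra 𝔹] (hccc : CCC 𝔹)
    {ι κ : Type u} (M : ι → κ → 𝔹) (hM : ∀ j, ⨆ i, M i j ≠ ⊥)
    (hdisj : ∀ i j j', j ≠ j' → M i j ⊓ M i j' = ⊥) : #κ ≤ #ι * ℵ₀ := by
  choose g hg using fun j => not_forall.1 (mt iSup_eq_bot.2 (hM j))
  refine mk_le_mk_mul_of_mk_preimage_le g fun i => mk_le_aleph0_iff.2 ?_
  refine hccc.countable_of_pairwise_inf_eq_bot (a := fun j : g ⁻¹' {i} => M i j)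
    (fun j j' h => hdisj i j j' (Subtype.coe_injective.ne h)) ?_
  rintro ⟨j, rfl⟩
  exact hg j

theorem ordinalMk_eq_toPSet (o : Ordinal.{u}) : ordinalMk o = o.toPSet := by
  induction o using WellFoundedLT.induction with
  | _ o ih =>
    rw [ordinalMk, Ordinal.toPSet]
    congr
    funext i
    exact ih _ (Ordinal.typein_lt_self i)

theorem Ordinal.mk_type_toPSet (o : Ordinal.{u}) : #o.toPSet.Type = o.card := by
  rw [type_toPSet, mk_toType]

theorem Ordinal.eq_of_equiv_toPSet_func {o : Ordinal.{u}} :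
    ∀ i j : o.toPSet.Type, (o.toPSet.Func i).Equiv (o.toPSet.Func j) → i = j := by
  rw [toPSet]
  intro i j h
  exact ToType.mk.symm.injective (Subtype.ext (toZFSet_injective (ZFSet.sound h)))

namespace bSet

variable {𝔹 : Type u} [CompleteBooleanAlgebra 𝔹]

theorem mk_type_le_mk_type_mul_aleph0 (hccc : CCC 𝔹) {x y : PSet.{u}}
    (hy : ∀ j j', (y.Func j).Equiv (y.Func j') → j = j') {f : bSet 𝔹} {Γ : 𝔹}
    (hΓ : Γ ≠ ⊥) (h : Γ ≤ isSurjOnto (check 𝔹 x) (check 𝔹 y) f) : #y.Type ≤ #x.Type * ℵ₀ := by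
  set M := fun i j => bvMem (kpair (check 𝔹 (x.Func i)) (check 𝔹 (y.Func j))) f
  refine hccc.mk_le_mk_mul_aleph0 (fun i j => Γ ⊓ M i j) (fun j => ?_) (fun i j j' hj => ?_)
  · have hcover : Γ ≤ ⨆ i, M i j :=
      calc Γ ≤ isSurj (check 𝔹 x) (check 𝔹 y) f ⊓ bvMem (check 𝔹 (y.Func j)) (check 𝔹 y) := by
            rw [bvMem_check_func, inf_top_eq]; exact h.trans inf_le_right
        _ ≤ ⨆ i, M i j := isSurj_check_inf_bvMem_le x _ f _
    rwa [← inf_iSup_eq, inf_eq_left.2 hcover]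
  · have hfunc : Γ ≤ isFunc f := h.trans (inf_le_left.trans (inf_le_left.trans inf_le_left))
    rw [eq_bot_iff, ← bvEq_check_eq_bot (mt (hy j j') hj)]
    calc Γ ⊓ M i j ⊓ (Γ ⊓ M i j') ≤ isFunc f ⊓ (M i j ⊓ M i j') :=
          le_inf (inf_le_left.trans (inf_le_left.trans hfunc))
            (inf_le_inf inf_le_right inf_le_right)
      _ ≤ _ := isFunc_inf_le_bvEq f _ _ _

theorem iSup_isSurjOnto_check_eq_bot (hccc : CCC 𝔹) {x y : PSet.{u}}
    (hy : ∀ j j', (y.Func j).Equiv (y.Func j') → j = j')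
    (hcard : #x.Type * ℵ₀ < #y.Type) : ⨆ f : bSet 𝔹, isSurjOnto (check 𝔹 x) (check 𝔹 y) f = ⊥ :=
  iSup_eq_bot.2 fun _ => by_contra fun hne =>
    hcard.not_ge (mk_type_le_mk_type_mul_aleph0 hccc hy hne le_rfl)

theorem iSup_isSurjOnto_check_ordinalMk_eq_bot (hccc : CCC 𝔹) {κ₁ κ₂ : Cardinal.{u}}
    (h₁ : ℵ₀ ≤ κ₁) (h : κ₁ < κ₂) :
    ⨆ f : bSet 𝔹, isSurjOnto (check 𝔹 (ordinalMk κ₁.ord)) (check 𝔹 (ordinalMk κ₂.ord)) f = ⊥ := by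
  rw [ordinalMk_eq_toPSet, ordinalMk_eq_toPSet]
  refine iSup_isSurjOnto_check_eq_bot hccc Ordinal.eq_of_equiv_toPSet_func ?_
  rwa [Ordinal.mk_type_toPSet, Ordinal.mk_type_toPSet, card_ord, card_ord, mul_aleph0_eq h₁]

end bSet

open bSet Cardinal in
/-- If `𝔹` has the countable chain condition then: no nonzero truth value forces a
surjection from `ω̌` onto `ℵ₁̌`, none forces a surjection from `ℵ₁̌` onto `ℵ₂̌`
(equivalently, the corresponding existential truth values are `⊥`), and in general
for infinite regular cardinals `κ₁ < κ₂` no nonzero truth value forces a surjection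
from `κ₁̌` onto `κ₂̌`. -/
theorem ccc_no_collapse {𝔹 : Type u} [CompleteBooleanAlgebra 𝔹] (hccc : CCC 𝔹) :
    ((⨆ f : bSet 𝔹, isSurjOnto (check 𝔹 PSet.omega)
        (check 𝔹 (ordinalMk (aleph 1).ord)) f) = ⊥) ∧
    ((⨆ f : bSet 𝔹, isSurjOnto (check 𝔹 (ordinalMk (aleph 1).ord))
        (check 𝔹 (ordinalMk (aleph 2).ord)) f) = ⊥) ∧
    (∀ κ₁ κ₂ : Cardinal.{u}, ℵ₀ ≤ κ₁ → κ₁.IsRegular → κ₂.IsRegular → κ₁ < κ₂ →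
      ∀ (f : bSet 𝔹) (Γ : 𝔹), ⊥ < Γ →
        ¬ Γ ≤ isSurjOnto (check 𝔹 (ordinalMk κ₁.ord)) (check 𝔹 (ordinalMk κ₂.ord)) f) := by
  refine ⟨?_, iSup_isSurjOnto_check_ordinalMk_eq_bot hccc (aleph0_le_aleph 1)
    (aleph_lt_aleph.2 one_lt_two), fun κ₁ κ₂ h₁ _ _ h f Γ hΓ hle => hΓ.ne' (le_bot_iff.1 ?_)⟩
  · rw [ordinalMk_eq_toPSet]
    refine iSup_isSurjOnto_check_eq_bot hccc Ordinal.eq_of_equiv_toPSet_func ?_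
    rw [Ordinal.mk_type_toPSet, card_ord]
    simp [PSet.omega]
  · exact iSup_isSurjOnto_check_ordinalMk_eq_bot hccc h₁ h ▸ hle.trans (le_iSup _ f)
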